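/- Even when strong duality holds, a maximizer of the Lagrangian need not be a Nash policy: in the modified game, the pair x = y = (1/2, 1/2) attains the supremum of the Lagrangian at λ = 1 (indeed x'ᵀA' y' + 1·(1/2 − x'ᵀB y') = 7/2 for all x', y' ∈ Δ₂), and it is feasible since xᵀB y = 1/4 ≤ 1/2, but it is not a Nash policy: the deviation x' = (0, 1) by player 1 is feasible, since x'ᵀB y = 1/2 ≤ 1/2, and strictly improves the payoff, since x'ᵀA' y = 7/2 > 13/4 = xᵀA' y. -/
import Mathlib

/-- The probability simplex in ℝ². -/
def simplex2 : Set (ℝ × ℝ) := {x | 0 ≤ x.1 ∧ 0 ≤ x.2 ∧ x.1 + x.2 = 1}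

/-- Payoff `xᵀ A' y` for the modified matrix `A' = [[3,3],[3,4]]`. -/
def pay' (x y : ℝ × ℝ) : ℝ := 3 * x.1 * y.1 + 3 * x.1 * y.2 + 3 * x.2 * y.1 + 4 * x.2 * y.2

/-- Constraint value `xᵀ B y` for `B = [[0,0],[0,1]]`. -/
def con (x y : ℝ × ℝ) : ℝ := x.2 * y.2

/-- Even when strong duality holds, a maximizer of the Lagrangian need not be a
Nash policy: in the modified game, `x = y = (1/2, 1/2)` attains the supremum of
the Lagrangian at `λ = 1` (all Lagrangian values equal `7/2`), is feasible, but
player 1 has a feasible strictly improving deviation `x' = (0, 1)`. -/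
theorem lagrangian_maximizer_not_nash_modified_game :
    (∀ x' ∈ simplex2, ∀ y' ∈ simplex2,
      pay' x' y' + 1 * (1 / 2 - con x' y') = 7 / 2) ∧
    ((1 / 2 : ℝ), (1 / 2 : ℝ)) ∈ simplex2 ∧
    con (1 / 2, 1 / 2) (1 / 2, 1 / 2) = 1 / 4 ∧
    con (1 / 2, 1 / 2) (1 / 2, 1 / 2) ≤ 1 / 2 ∧
    ((0 : ℝ), (1 : ℝ)) ∈ simplex2 ∧
    con (0, 1) (1 / 2, 1 / 2) = 1 / 2 ∧
    con (0, 1) (1 / 2, 1 / 2) ≤ 1 / 2 ∧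
    pay' (0, 1) (1 / 2, 1 / 2) = 7 / 2 ∧
    pay' (1 / 2, 1 / 2) (1 / 2, 1 / 2) = 13 / 4 ∧
    (13 / 4 : ℝ) < 7 / 2 := by
  refine ⟨?_, ⟨by norm_num, by norm_num, by norm_num⟩, by norm_num [con],
    by norm_num [con], ⟨by norm_num, by norm_num, by norm_num⟩, by norm_num [con],
    by norm_num [con], by norm_num [pay'], by norm_num [pay'], by norm_num⟩
  rintro x ⟨_, _, hx⟩ y ⟨_, _, hy⟩
  simp only [pay', con]
  nlinarith [hx, hy]
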